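/- Let v̂_n(z) = (zⁿ, …, z, 1) and let α ∈ SL(2,ℝ). Then for each ν ≥ 0, the ν-th derivative satisfies ((D^ν v̂_n) |_{−n+2ν} α)(z) = Σ_{ℓ=0}^{ν} [(−1)^{ν−ℓ} ν! (n−ℓ)! / (ℓ! (ν−ℓ)! (n−ν)!)] · 𝔎(α,z)^{ν−ℓ} · D^ℓ(v̂_n |_{−n} α)(z). -/

import Mathlib

open Matrix Complex Finset

abbrev SL2R := Matrix.SpecialLinearGroup (Fin 2) ℝ

noncomputable def Jf (γ : SL2R) (z : ℂ) : ℂ := (γ.1 1 0 : ℝ) * z + (γ.1 1 1 : ℝ)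

noncomputable def Kf (γ : SL2R) (z : ℂ) : ℂ := (γ.1 1 0 : ℝ) / Jf γ z

noncomputable def actSL (γ : SL2R) (z : ℂ) : ℂ :=
  ((γ.1 0 0 : ℝ) * z + (γ.1 0 1 : ℝ)) / Jf γ z

/-- The vector (z₁, z₂)^n. -/
def symVec (n : ℕ) (z₁ z₂ : ℂ) : Fin (n + 1) → ℂ :=
  fun i => z₁ ^ (n - (i : ℕ)) * z₂ ^ (i : ℕ)

/-- v̂_n(z) = (zⁿ, …, z, 1). -/
def vhat (n : ℕ) (z : ℂ) : Fin (n + 1) → ℂ := symVec n z 1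

/-! Put `g ν z = 𝔍(α,z)^(k-2ν) • (D^ν h)(αz)`. Since `(αz)' = 𝔍(α,z)⁻²` and `𝔍' = c`, these satisfy
`g ν' = g (ν+1) + (k - 2ν) 𝔎 • g ν`, while `𝔎' = -𝔎²`. These two relations alone express `g ν`
through the derivatives of `g 0 = h |_{-k} α`: differentiating the formula for `g ν` and
subtracting `(k - 2ν) 𝔎 • g ν` gives the one for `g (ν+1)`, because the coefficients
`c ν ℓ = (-1)^(ν-ℓ) (ν choose ℓ) (k-ℓ)(k-ℓ-1)⋯(k-ν+1)` satisfy
`c (ν+1) (ℓ+1) = c ν ℓ - (k - ν - ℓ - 1) c ν (ℓ+1)`. For `k = n ≥ ν` they are the factorial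
quotients of the statement. -/

section Coeff
variable {R : Type*} [CommRing R]

noncomputable def slashDerivCoeff (k : R) (ν ℓ : ℕ) : R :=
  (-1) ^ (ν - ℓ) * (ν.choose ℓ : R) * (descPochhammer R (ν - ℓ)).eval (k - ℓ)

lemma slashDerivCoeff_of_lt (k : R) {ν ℓ : ℕ} (h : ν < ℓ) : slashDerivCoeff k ν ℓ = 0 := by
  simp [slashDerivCoeff, Nat.choose_eq_zero_of_lt h]

@[simp] lemma slashDerivCoeff_self (k : R) (ν : ℕ) : slashDerivCoeff k ν ν = 1 := by
  simp [slashDerivCoeff]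

lemma slashDerivCoeff_succ_zero (k : R) (ν : ℕ) :
    slashDerivCoeff k (ν + 1) 0 = -(k - ν) * slashDerivCoeff k ν 0 := by
  simp only [slashDerivCoeff, Nat.sub_zero, Nat.choose_zero_right, Nat.cast_zero, sub_zero,
    descPochhammer_succ_eval]
  ring

lemma slashDerivCoeff_succ_succ (k : R) (ν ℓ : ℕ) :
    slashDerivCoeff k (ν + 1) (ℓ + 1) =
      slashDerivCoeff k ν ℓ - (k - ν - (ℓ + 1 : ℕ)) * slashDerivCoeff k ν (ℓ + 1) := by
  rcases lt_trichotomy ℓ ν with h | rfl | h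
  · obtain ⟨p, rfl⟩ := Nat.exists_eq_add_of_lt h
    have hchoose : ((ℓ + p + 1).choose (ℓ + 1) : R) * (ℓ + 1 : ℕ) =
        (ℓ + p + 1).choose ℓ * (p + 1 : ℕ) := by
      have := Nat.choose_succ_right_eq (ℓ + p + 1) ℓ
      rw [show ℓ + p + 1 - ℓ = p + 1 by omega] at this
      exact_mod_cast congrArg (Nat.cast : ℕ → R) this
    have hpascal : ((ℓ + p + 1 + 1).choose (ℓ + 1) : R) =
        (ℓ + p + 1).choose ℓ + (ℓ + p + 1).choose (ℓ + 1) := by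
      exact_mod_cast congrArg (Nat.cast : ℕ → R) (Nat.choose_succ_succ' _ _)
    have hshift : (descPochhammer R (p + 1)).eval (k - ℓ) =
        (k - ℓ) * (descPochhammer R p).eval (k - (ℓ + 1 : ℕ)) := by
      rw [descPochhammer_succ_left, Polynomial.eval_mul, Polynomial.eval_comp]
      simp only [Polynomial.eval_X, Polynomial.eval_sub, Polynomial.eval_one, Nat.cast_succ]
      ring_nf
    simp only [slashDerivCoeff, hpascal,
      show ℓ + p + 1 + 1 - (ℓ + 1) = p + 1 by omega, show ℓ + p + 1 - ℓ = p + 1 by omega,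
      show ℓ + p + 1 - (ℓ + 1) = p by omega, descPochhammer_succ_eval, hshift]
    push_cast at hchoose ⊢
    linear_combination (-1) ^ (p + 1) * (descPochhammer R p).eval (k - (ℓ + 1)) * hchoose
  · simp [slashDerivCoeff_of_lt k (Nat.lt_succ_self ℓ)]
  · rw [slashDerivCoeff_of_lt k (by omega), slashDerivCoeff_of_lt k h,
      slashDerivCoeff_of_lt k (by omega)]
    ring

lemma sum_slashDerivCoeff_succ {E : Type*} [AddCommGroup E] [Module R E] (k x : R) (F : ℕ → E)
    (ν : ℕ) :
    ∑ ℓ ∈ range (ν + 2), (slashDerivCoeff k (ν + 1) ℓ * x ^ (ν + 1 - ℓ)) • F ℓ =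
      ∑ ℓ ∈ range (ν + 1), (slashDerivCoeff k ν ℓ * x ^ (ν - ℓ)) • F (ℓ + 1) -
        ∑ ℓ ∈ range (ν + 1), ((k - ν - ℓ) * slashDerivCoeff k ν ℓ * x ^ (ν + 1 - ℓ)) • F ℓ := by
  have hextend :
      ∑ ℓ ∈ range (ν + 1), ((k - ν - ℓ) * slashDerivCoeff k ν ℓ * x ^ (ν + 1 - ℓ)) • F ℓ =
        ∑ ℓ ∈ range (ν + 2), ((k - ν - ℓ) * slashDerivCoeff k ν ℓ * x ^ (ν + 1 - ℓ)) • F ℓ := by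
    rw [sum_range_succ _ (ν + 1), slashDerivCoeff_of_lt k (Nat.lt_succ_self ν), mul_zero,
      zero_mul, zero_smul, add_zero]
  rw [hextend, sum_range_succ', sum_range_succ' _ (ν + 1)]
  simp only [slashDerivCoeff_succ_succ, slashDerivCoeff_succ_zero, Nat.add_sub_add_right,
    sub_mul, sub_smul, sum_sub_distrib]
  module

end Coeff

lemma slashDerivCoeff_natCast {K : Type*} [Field K] [CharZero K] {n ν ℓ : ℕ} (hℓ : ℓ ≤ ν)
    (hν : ν ≤ n) :
    slashDerivCoeff (n : K) ν ℓ =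
      (-1) ^ (ν - ℓ) * (ν.factorial : K) * ((n - ℓ).factorial : K) /
        ((ℓ.factorial : K) * ((ν - ℓ).factorial : K) * ((n - ν).factorial : K)) := by
  have hchoose : (ν.choose ℓ * ℓ.factorial * (ν - ℓ).factorial : K) = ν.factorial := by
    exact_mod_cast Nat.choose_mul_factorial_mul_factorial hℓ
  have hdesc : ((n - ν).factorial * (n - ℓ).descFactorial (ν - ℓ) : K) = (n - ℓ).factorial := by
    rw [show n - ν = n - ℓ - (ν - ℓ) by omega]
    exact_mod_cast Nat.factorial_mul_descFactorial (by omega)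
  rw [eq_div_iff (by simp [Nat.factorial_ne_zero]), slashDerivCoeff,
    ← Nat.cast_sub (hℓ.trans hν), descPochhammer_eval_eq_descFactorial]
  linear_combination (-1 : K) ^ (ν - ℓ) *
    ((n - ν).factorial * (n - ℓ).descFactorial (ν - ℓ) * hchoose + ν.factorial * hdesc)

section Analytic
variable {E : Type*} [NormedAddCommGroup E] [NormedSpace ℂ E]

noncomputable def slashDerivSum (k : ℂ) (K : ℂ → ℂ) (f : ℂ → E) (ν : ℕ) (z : ℂ) : E :=
  ∑ ℓ ∈ range (ν + 1), (slashDerivCoeff k ν ℓ * K z ^ (ν - ℓ)) • iteratedDeriv ℓ f z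

lemma HasDerivAt.pow_of_neg_sq {𝕜 : Type*} [NontriviallyNormedField 𝕜] {K : 𝕜 → 𝕜} {z : 𝕜}
    (hK : HasDerivAt K (-K z ^ 2) z) (m : ℕ) :
    HasDerivAt (fun w => K w ^ m) (-(m * K z ^ (m + 1))) z :=
  (hK.pow m).congr_deriv (by cases m <;> simp; ring)

lemma hasDerivAt_slashDerivSum (k : ℂ) {K : ℂ → ℂ} {f : ℂ → E} {z : ℂ}
    (hK : HasDerivAt K (-K z ^ 2) z) (hf : ∀ ℓ, DifferentiableAt ℂ (iteratedDeriv ℓ f) z)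
    (ν : ℕ) :
    HasDerivAt (slashDerivSum k K f ν)
      (slashDerivSum k K f (ν + 1) z + ((k - 2 * ν) * K z) • slashDerivSum k K f ν z) z := by
  have hF (ℓ : ℕ) : HasDerivAt (iteratedDeriv ℓ f) (iteratedDeriv (ℓ + 1) f z) z := by
    rw [iteratedDeriv_succ]
    exact (hf ℓ).hasDerivAt
  refine (HasDerivAt.fun_sum fun ℓ _ =>
    (((hK.pow_of_neg_sq (ν - ℓ)).const_mul (slashDerivCoeff k ν ℓ)).smul (hF ℓ))).congr_deriv ?_
  rw [slashDerivSum, slashDerivSum, sum_slashDerivCoeff_succ, smul_sum, sub_add_eq_add_sub,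
    add_sub_assoc, ← sum_sub_distrib, sum_add_distrib]
  congr 1
  refine sum_congr rfl fun ℓ hℓ => ?_
  obtain ⟨m, rfl⟩ := Nat.exists_eq_add_of_le (Nat.lt_succ_iff.mp (mem_range.mp hℓ))
  rw [smul_smul, ← sub_smul, Nat.add_sub_cancel_left, show ℓ + m + 1 - ℓ = m + 1 by omega]
  congr 1
  push_cast
  ring

theorem eq_slashDerivSum_of_hasDerivAt [CompleteSpace E] {U : Set ℂ} (hU : IsOpen U) (k : ℂ)
    {K : ℂ → ℂ} {g : ℕ → ℂ → E} (hK : ∀ z ∈ U, HasDerivAt K (-K z ^ 2) z)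
    (hg : ∀ ν, ∀ z ∈ U, HasDerivAt (g ν) (g (ν + 1) z + ((k - 2 * ν) * K z) • g ν z) z)
    (ν : ℕ) : ∀ z ∈ U, g ν z = slashDerivSum k K (g 0) ν z := by
  have hanalytic : AnalyticOnNhd ℂ (g 0) U :=
    DifferentiableOn.analyticOnNhd
      (fun z hz => (hg 0 z hz).differentiableAt.differentiableWithinAt) hU
  have hdiff (z : ℂ) (hz : z ∈ U) (ℓ : ℕ) : DifferentiableAt ℂ (iteratedDeriv ℓ (g 0)) z := by
    rw [iteratedDeriv_eq_iterate]
    exact (hanalytic.iterated_deriv ℓ z hz).differentiableAt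
  induction ν with
  | zero => intro z _; simp [slashDerivSum]
  | succ ν ih =>
    intro z hz
    have hsum := hasDerivAt_slashDerivSum k (hK z hz) (hdiff z hz) ν
    have heq : g ν =ᶠ[nhds z] slashDerivSum k K (g 0) ν :=
      Filter.eventually_of_mem (hU.mem_nhds hz) ih
    have := (hg ν z hz).unique (hsum.congr_of_eventuallyEq heq)
    rwa [ih z hz, add_left_inj] at this

lemma Jf_ne_zero (α : SL2R) {z : ℂ} (hz : 0 < z.im) : Jf α z ≠ 0 := by
  simpa [UpperHalfPlane.denom, Jf] using
    UpperHalfPlane.denom_ne_zero (α : GL (Fin 2) ℝ) ⟨z, hz⟩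

lemma hasDerivAt_Jf (α : SL2R) (z : ℂ) : HasDerivAt (Jf α) (α.1 1 0 : ℂ) z := by
  unfold Jf
  simpa using ((hasDerivAt_id z).const_mul (α.1 1 0 : ℂ)).add_const (α.1 1 1 : ℂ)

lemma hasDerivAt_actSL (α : SL2R) {z : ℂ} (hJ : Jf α z ≠ 0) :
    HasDerivAt (actSL α) ((Jf α z ^ 2)⁻¹) z := by
  have hdet : (α.1 0 0 : ℂ) * α.1 1 1 - α.1 0 1 * α.1 1 0 = 1 := by
    have := α.det_coe
    rw [Matrix.det_fin_two] at this
    exact_mod_cast this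
  have hnum : HasDerivAt (fun w : ℂ => (α.1 0 0 : ℂ) * w + α.1 0 1) (α.1 0 0 : ℂ) z := by
    simpa using ((hasDerivAt_id z).const_mul (α.1 0 0 : ℂ)).add_const (α.1 0 1 : ℂ)
  refine (hnum.div (hasDerivAt_Jf α z) hJ).congr_deriv ?_
  rw [div_eq_iff (pow_ne_zero 2 hJ), inv_mul_cancel₀ (pow_ne_zero 2 hJ), Jf]
  linear_combination hdet

lemma hasDerivAt_Kf (α : SL2R) {z : ℂ} (hJ : Jf α z ≠ 0) :
    HasDerivAt (Kf α) (-Kf α z ^ 2) z := by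
  refine ((hasDerivAt_const z (α.1 1 0 : ℂ)).div (hasDerivAt_Jf α z) hJ).congr_deriv ?_
  rw [Kf]
  field_simp
  ring

lemma hasDerivAt_zpow_Jf_smul_comp_actSL (α : SL2R) (m : ℤ) {h : ℂ → E} {h' : E} {z : ℂ}
    (hJ : Jf α z ≠ 0) (hh : HasDerivAt h h' (actSL α z)) :
    HasDerivAt (fun w => Jf α w ^ m • h (actSL α w))
      (Jf α z ^ (m - 2) • h' + (m * Kf α z) • (Jf α z ^ m • h (actSL α z))) z := by
  have hpow := (hasDerivAt_zpow m (Jf α z) (Or.inl hJ)).comp z (hasDerivAt_Jf α z)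
  refine (hpow.smul (hh.scomp z (hasDerivAt_actSL α hJ))).congr_deriv ?_
  simp only [Function.comp_apply, smul_smul, zpow_sub₀ hJ, Kf]
  congr 1
  field_simp

theorem slash_iteratedDeriv_eq_slashDerivSum [CompleteSpace E] (α : SL2R) (k : ℤ) {h : ℂ → E}
    (hh : Differentiable ℂ h) (ν : ℕ) {z : ℂ} (hz : 0 < z.im) :
    Jf α z ^ (k - 2 * ν) • iteratedDeriv ν h (actSL α z) =
      slashDerivSum k (Kf α) (fun w => Jf α w ^ k • h (actSL α w)) ν z := by
  have hderiv (μ : ℕ) (w : ℂ) : HasDerivAt (iteratedDeriv μ h) (iteratedDeriv (μ + 1) h w) w := by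
    rw [iteratedDeriv_succ]
    exact ((hh.contDiff (n := ⊤)).differentiable_iteratedDeriv μ (by simp)).differentiableAt
      |>.hasDerivAt
  have key := eq_slashDerivSum_of_hasDerivAt (isOpen_lt continuous_const continuous_im) k
    (g := fun μ w => Jf α w ^ (k - 2 * μ) • iteratedDeriv μ h (actSL α w))
    (fun w hw => hasDerivAt_Kf α (Jf_ne_zero α hw))
    (fun μ w hw => (hasDerivAt_zpow_Jf_smul_comp_actSL α _ (Jf_ne_zero α hw)
      (hderiv μ _)).congr_deriv (by push_cast; ring_nf)) ν z hz
  simpa only [Nat.cast_zero, mul_zero, sub_zero, iteratedDeriv_zero] using key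

end Analytic

lemma differentiable_vhat (n : ℕ) : Differentiable ℂ (vhat n) :=
  differentiable_pi.2 fun i => by unfold vhat symVec; fun_prop

/-- For α ∈ SL(2,ℝ) and 0 ≤ ν ≤ n,
((D^ν v̂_n) |_{−n+2ν} α)(z) =
Σ_{ℓ=0}^{ν} [(−1)^{ν−ℓ} ν! (n−ℓ)! / (ℓ! (ν−ℓ)! (n−ν)!)] 𝔎(α,z)^{ν−ℓ}
  D^ℓ(v̂_n |_{−n} α)(z). -/
theorem iteratedDeriv_vhat_slash (n ν : ℕ) (hν : ν ≤ n) (α : SL2R)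
    (z : ℂ) (hz : 0 < z.im) :
    Jf α z ^ ((n : ℤ) - 2 * ν) • iteratedDeriv ν (vhat n) (actSL α z) =
      ∑ ℓ ∈ Finset.range (ν + 1),
        ((-1 : ℂ) ^ (ν - ℓ) * (ν.factorial : ℂ) * ((n - ℓ).factorial : ℂ) /
              ((ℓ.factorial : ℂ) * ((ν - ℓ).factorial : ℂ) * ((n - ν).factorial : ℂ)) *
            Kf α z ^ (ν - ℓ)) •
          iteratedDeriv ℓ (fun w => Jf α w ^ n • vhat n (actSL α w)) z := by
  rw [slash_iteratedDeriv_eq_slashDerivSum α n (differentiable_vhat n) ν hz, slashDerivSum]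
  simp only [zpow_natCast, Int.cast_natCast]
  refine sum_congr rfl fun ℓ hℓ => ?_
  rw [slashDerivCoeff_natCast (Nat.lt_succ_iff.mp (mem_range.mp hℓ)) hν]
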